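/- arXiv:1210.1862 — 2 statements merged into one kernel-verified Lean document; each statement's English description precedes it below -/
import Mathlib

section
/- Let Ψ: [0,∞) → ℝ be differentiable and convex with nondecreasing derivative. Then for all s > 1 and x > 1, Ψ(s·x) − s·Ψ(x) ≥ (s−1)·(Ψ'(x) − Ψ'(1)). -/
open Set Filter

/-! Each of the three convexity estimates behind the inequality is an instance of the tangent line
inequality `Ψ y ≥ Ψ a + Ψ'(a) (y - a)`: at `a = x` towards `y = s x` and `y = 1`, and at `a = 1`
towards `y = 0`, where `Ψ 0 = 0` gives `Ψ 1 ≤ Ψ'(1)`. Adding the first to `s - 1` times the second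
gives `Ψ (s x) - s Ψ x ≥ (s - 1) (Ψ'(x) - Ψ 1)`. -/

theorem ConvexOn.deriv_mul_sub_le {S : Set ℝ} {f : ℝ → ℝ} {x y : ℝ} (hf : ConvexOn ℝ S f)
    (hx : x ∈ S) (hy : y ∈ S) (hfd : DifferentiableAt ℝ f x) :
    deriv f x * (y - x) ≤ f y - f x := by
  rcases lt_trichotomy x y with hxy | rfl | hyx
  · have hslope := hf.deriv_le_slope hx hy hxy hfd
    rwa [slope_def_field, le_div_iff₀ (sub_pos.2 hxy)] at hslope
  · simp
  · have hslope := hf.slope_le_deriv hy hx hyx hfd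
    rw [slope_def_field, div_le_iff₀ (sub_pos.2 hyx)] at hslope
    linarith

theorem convex_scaling_deriv_lower_bound_general
    (Ψ : ℝ → ℝ)
    (hconv : ConvexOn ℝ (Set.Ici (0 : ℝ)) Ψ)
    (hdiff : ∀ x ∈ Set.Ici (0 : ℝ), DifferentiableAt ℝ Ψ x)
    (h0 : Ψ 0 = 0)
    (s x : ℝ) (hs : 1 < s) (hx : 1 < x) :
    (s - 1) * (deriv Ψ x - deriv Ψ 1) ≤ Ψ (s * x) - s * Ψ x := by
  have hx₀ : x ∈ Ici (0 : ℝ) := mem_Ici.2 (by linarith)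
  have hsx₀ : s * x ∈ Ici (0 : ℝ) := mem_Ici.2 (by nlinarith)
  have h1₀ : (1 : ℝ) ∈ Ici 0 := mem_Ici.2 zero_le_one
  have hup := hconv.deriv_mul_sub_le hx₀ hsx₀ (hdiff x hx₀)
  have hdown := hconv.deriv_mul_sub_le hx₀ h1₀ (hdiff x hx₀)
  have hone := hconv.deriv_mul_sub_le h1₀ self_mem_Ici (hdiff 1 h1₀)
  have hs₁ : 0 ≤ s - 1 := by linarith
  nlinarith [mul_le_mul_of_nonneg_left hdown hs₁, mul_le_mul_of_nonneg_left hone hs₁]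

/-- Key inequality in the proof of Lemma 3.1:
for `Ψ` differentiable and convex on `[0,∞)` (so `Ψ'` is nondecreasing) with `Ψ 0 = 0`,
and `s > 1`, `x > 1`, we have `Ψ (s*x) - s * Ψ x ≥ (s - 1) * (Ψ' x - Ψ' 1)`. -/
theorem convex_scaling_deriv_lower_bound
    (Ψ : ℝ → ℝ)
    (hconv : ConvexOn ℝ (Set.Ici (0 : ℝ)) Ψ)
    (hdiff : ∀ x ∈ Set.Ici (0 : ℝ), DifferentiableAt ℝ Ψ x)
    (hderiv_mono : MonotoneOn (deriv Ψ) (Set.Ici (0 : ℝ)))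
    (h0 : Ψ 0 = 0)
    (s x : ℝ) (hs : 1 < s) (hx : 1 < x) :
    (s - 1) * (deriv Ψ x - deriv Ψ 1) ≤ Ψ (s * x) - s * Ψ x :=
  convex_scaling_deriv_lower_bound_general Ψ hconv hdiff h0 s x hs hx
end

section
/- Let σ₁, σ₂, … be i.i.d. positive-integer-valued random variables with P(σ₁ = n) = φ(n)/n^{1+α} for a slowly varying function φ and α > 0. Let C₁ > 0 and b ∈ (0, 1/2). Then for all sufficiently large n, the probability that the partial sums τ_l = σ₁ + ⋯ + σ_l reach the interval (n − bn, n] within l ≤ C₁ log n steps while every individual gap satisfies σ_i < bn is at most n^{−α/(9b)}. -/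
open MeasureTheory Filter Finset

/-!
Let `L = C₁ log n` and `r = ⌊1/(8b)⌋ + 1`. If all gaps are `< bn` and some `τ_l` with `l ≤ L`
lands in `(n - bn, n]`, then at least `r` of the first `L` gaps lie in `[n/(8L), n]`: the gaps
below `n/(8L)` contribute at most `n/8`, and fewer than `r` gaps of size `< bn` contribute at
most `n/8`, while `τ_l > n/2`. By independence and a union bound over the `r`-subsets, this has
probability at most `(L p)^r`, where `p = P(n/(8L) ≤ σ ≤ n) ≤ n · M (n/(8L))^(ε-1-α)` by the
Potter bound `φ(k) ≤ M k^ε`. Hence `(L p)^r ≤ n^(-r(α - O(ε)))`, and `rα > α/(8b)` leaves room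
to reach `n^(-α/(9b))`.
-/

lemma exists_le_mul_rpow_of_eventually_le_two_rpow_mul_half {φ : ℕ → ℝ} {ε : ℝ} (hε : 0 ≤ ε)
    (h : ∀ᶠ k in atTop, φ k ≤ 2 ^ ε * φ (k / 2)) :
    ∃ M, 0 ≤ M ∧ ∀ k, 1 ≤ k → φ k ≤ M * (k : ℝ) ^ ε := by
  obtain ⟨K, hK⟩ := eventually_atTop.mp (h.and (eventually_ge_atTop 2))
  set M := ∑ j ∈ range (K + 1), |φ j|
  have hM : 0 ≤ M := sum_nonneg fun j _ => abs_nonneg (φ j)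
  refine ⟨M, hM, fun k => ?_⟩
  induction k using Nat.strong_induction_on with
  | _ k ih =>
    intro hk
    have hk' : (1 : ℝ) ≤ k := by exact_mod_cast hk
    rcases le_or_gt k K with hkK | hKk
    · calc φ k ≤ |φ k| := le_abs_self _
        _ ≤ M := single_le_sum (fun j _ => abs_nonneg (φ j)) (mem_range.mpr (by omega))
        _ ≤ M * (k : ℝ) ^ ε := le_mul_of_one_le_right hM (Real.one_le_rpow hk' hε)
    · obtain ⟨hstep, hk2⟩ := hK k hKk.le
      have hhalf : ((k / 2 : ℕ) : ℝ) ≤ k / 2 := Nat.cast_div_le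
      calc φ k ≤ 2 ^ ε * φ (k / 2) := hstep
        _ ≤ 2 ^ ε * (M * ((k / 2 : ℕ) : ℝ) ^ ε) := by
          gcongr; exact ih _ (by omega) (by omega)
        _ ≤ 2 ^ ε * (M * ((k : ℝ) / 2) ^ ε) := by gcongr
        _ = M * (k : ℝ) ^ ε := by
          rw [Real.div_rpow (by positivity) zero_le_two]
          field_simp

lemma eventually_le_two_rpow_mul_half {φ : ℕ → ℝ} (hφ : ∀ k, 1 ≤ k → 0 < φ k)
    (hhalf : Tendsto (fun k : ℕ => φ ⌊(1 / 2 : ℝ) * k⌋₊ / φ k) atTop (nhds 1))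
    {ε : ℝ} (hε : 0 < ε) :
    ∀ᶠ k in atTop, φ k ≤ 2 ^ ε * φ (k / 2) := by
  have hq : (2 : ℝ) ^ (-ε) < 1 := Real.rpow_lt_one_of_one_lt_of_neg one_lt_two (neg_lt_zero.mpr hε)
  filter_upwards [hhalf.eventually_const_lt hq, eventually_ge_atTop 1] with k hk hk1
  have hfloor : ⌊(1 / 2 : ℝ) * k⌋₊ = k / 2 := by
    rw [one_div_mul_eq_div, ← Nat.floor_div_eq_div (K := ℝ) k 2, Nat.cast_ofNat]
  rw [hfloor, lt_div_iff₀ (hφ k hk1), Real.rpow_neg zero_le_two, inv_mul_eq_div,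
    div_lt_iff₀ (by positivity)] at hk
  linarith

lemma measure_preimage_finset_le_card_mul {Ω β : Type*} [MeasurableSpace Ω] (μ : Measure Ω)
    (f : Ω → β) (s : Finset β) {c : ENNReal} (hc : ∀ k ∈ s, μ (f ⁻¹' {k}) ≤ c) :
    μ (f ⁻¹' s) ≤ #s * c := by
  rw [← set_biUnion_preimage_singleton, ← nsmul_eq_mul]
  exact (measure_biUnion_finset_le _ _).trans (sum_le_card_nsmul _ _ _ hc)

lemma measure_preimage_Icc_ceil_le {Ω : Type*} [MeasurableSpace Ω] {μ : Measure Ω} {f : Ω → ℕ}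
    {φ : ℕ → ℝ} {α ε M : ℝ} (hεα : ε ≤ 1 + α) (hM : 0 ≤ M)
    (hφ : ∀ k, 1 ≤ k → φ k ≤ M * (k : ℝ) ^ ε)
    (hlaw : ∀ k : ℕ, 1 ≤ k → μ {x | f x = k} = ENNReal.ofReal (φ k / (k : ℝ) ^ (1 + α)))
    {s : ℝ} (hs : 0 < s) (n : ℕ) :
    μ (f ⁻¹' Set.Icc ⌈s⌉₊ n) ≤ ENNReal.ofReal ((n + 1) * (M * s ^ (ε - (1 + α)))) := by
  have hatom : ∀ k ∈ Icc ⌈s⌉₊ n, μ (f ⁻¹' {k}) ≤ ENNReal.ofReal (M * s ^ (ε - (1 + α))) := by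
    intro k hk
    have hsk : s ≤ k := Nat.ceil_le.mp (mem_Icc.mp hk).1
    have hk0 : (0 : ℝ) < k := hs.trans_le hsk
    have hk1 : 1 ≤ k := Nat.cast_pos.mp hk0
    change μ {x | f x = k} ≤ _
    rw [hlaw k hk1]
    gcongr
    calc φ k / (k : ℝ) ^ (1 + α) ≤ M * (k : ℝ) ^ ε / (k : ℝ) ^ (1 + α) := by gcongr; exact hφ k hk1
      _ = M * (k : ℝ) ^ (ε - (1 + α)) := by rw [Real.rpow_sub hk0 ε (1 + α)]; ring
      _ ≤ M * s ^ (ε - (1 + α)) :=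
        mul_le_mul_of_nonneg_left (Real.rpow_le_rpow_of_nonpos hs hsk (by linarith)) hM
  calc μ (f ⁻¹' Set.Icc ⌈s⌉₊ n) ≤ #(Icc ⌈s⌉₊ n) * ENNReal.ofReal (M * s ^ (ε - (1 + α))) := by
        simpa using measure_preimage_finset_le_card_mul μ f _ hatom
    _ ≤ ENNReal.ofReal (n + 1) * ENNReal.ofReal (M * s ^ (ε - (1 + α))) := by
        gcongr
        rw [← ENNReal.ofReal_natCast]
        gcongr
        rw [Nat.card_Icc]
        exact_mod_cast Nat.sub_le _ _
    _ = _ := (ENNReal.ofReal_mul (by positivity)).symm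

lemma sum_le_card_filter_mul_add_card_mul {ι : Type*} (I : Finset ι) (x : ι → ℝ) {a s : ℝ}
    (hs : 0 ≤ s) (hx : ∀ i ∈ I, x i ≤ a) :
    ∑ i ∈ I, x i ≤ #{i ∈ I | s ≤ x i} * a + #I * s := by
  rw [← sum_filter_add_sum_filter_not I (fun i => s ≤ x i)]
  gcongr
  · simpa using sum_le_card_nsmul _ _ _ fun i hi => hx i (mem_filter.mp hi).1
  · calc ∑ i ∈ I with ¬s ≤ x i, x i ≤ #{i ∈ I | ¬s ≤ x i} * s := by
          simpa using sum_le_card_nsmul _ x s fun i hi => (not_le.mp (mem_filter.mp hi).2).le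
      _ ≤ #I * s := mul_le_mul_of_nonneg_right (by exact_mod_cast card_filter_le _ _) hs

lemma floor_lt_card_filter_of_sum_mem_Ioc (x : ℕ → ℝ) {l : ℕ} {n b L : ℝ}
    (hb : b ∈ Set.Ioo (0 : ℝ) (1 / 2)) (hL : 0 < L) (hlL : l ≤ L)
    (hx : ∀ i < l, x i < b * n) (hsum : ∑ i ∈ range l, x i ∈ Set.Ioc (n - b * n) n) :
    ⌊1 / (8 * b)⌋₊ < #{i ∈ range l | n / (8 * L) ≤ x i} := by
  obtain ⟨hb0, hb2⟩ := hb
  have hn : 0 < n := by nlinarith [hsum.1, hsum.2]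
  by_contra! hfew
  have hfew' : (#{i ∈ range l | n / (8 * L) ≤ x i} : ℝ) * (b * n) ≤ n / 8 := calc
    _ ≤ (1 / (8 * b)) * (b * n) := by
      gcongr
      exact (Nat.cast_le.mpr hfew).trans (Nat.floor_le (by positivity))
    _ = n / 8 := by field_simp
  have hl : (#(range l) : ℝ) * (n / (8 * L)) ≤ n / 8 := calc
    _ ≤ L * (n / (8 * L)) := by rw [card_range]; gcongr
    _ = n / 8 := by field_simp
  have := sum_le_card_filter_mul_add_card_mul (range l) x (a := b * n) (s := n / (8 * L))
    (by positivity) fun i hi => (hx i (mem_range.mp hi)).le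
  nlinarith [hsum.1]

lemma setOf_exists_sum_mem_Ioc_subset {Ω : Type*} (σ : ℕ → Ω → ℕ) (n : ℕ) {b L : ℝ}
    (hb : b ∈ Set.Ioo (0 : ℝ) (1 / 2)) (hL : 0 < L) :
    {x | ∃ l : ℕ, (l : ℝ) ≤ L ∧
        (n : ℝ) - b * n < (∑ i ∈ range l, (σ i x : ℝ)) ∧
        (∑ i ∈ range l, (σ i x : ℝ)) ≤ (n : ℝ) ∧
        ∀ i < l, (σ i x : ℝ) < b * n}
      ⊆ {x | ⌊1 / (8 * b)⌋₊ + 1 ≤ #{i ∈ range (⌊L⌋₊ + 1) | σ i x ∈ Set.Icc ⌈n / (8 * L)⌉₊ n}} := by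
  rintro x ⟨l, hlL, hlo, hhi, hx⟩
  refine (floor_lt_card_filter_of_sum_mem_Ioc (fun i => (σ i x : ℝ)) hb hL hlL hx
    ⟨hlo, hhi⟩).trans_le (card_le_card fun i hi => ?_)
  obtain ⟨hil, hbig⟩ := mem_filter.mp hi
  have hiL : i ≤ ⌊L⌋₊ := Nat.le_floor ((Nat.cast_le.mpr (mem_range.mp hil).le).trans hlL)
  have hle : (σ i x : ℝ) ≤ n :=
    (single_le_sum (fun j _ => Nat.cast_nonneg (σ j x)) hil).trans hhi
  exact mem_filter.mpr ⟨mem_range.mpr (Nat.lt_succ_of_le hiL), Nat.ceil_le.mpr hbig,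
    by exact_mod_cast hle⟩

theorem ProbabilityTheory.iIndepFun.measure_le_card_filter_mem_le {Ω ι β : Type*}
    [MeasurableSpace Ω] {μ : Measure Ω} [MeasurableSpace β] {σ : ι → Ω → β}
    (hσ : iIndepFun σ μ) {B : Set β} [DecidablePred (· ∈ B)] (hB : MeasurableSet B)
    (I : Finset ι) {p : ENNReal} (hp : ∀ i ∈ I, μ (σ i ⁻¹' B) ≤ p) (r : ℕ) :
    μ {x | r ≤ #{i ∈ I | σ i x ∈ B}} ≤ (#I).choose r * p ^ r := by
  have hcover : {x | r ≤ #{i ∈ I | σ i x ∈ B}} ⊆ ⋃ S ∈ powersetCard r I, ⋂ i ∈ S, σ i ⁻¹' B := by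
    intro x hx
    obtain ⟨S, hST, hS⟩ := exists_subset_card_eq hx
    exact Set.mem_biUnion (mem_powersetCard.mpr ⟨hST.trans (filter_subset _ _), hS⟩) <|
      Set.mem_iInter₂.mpr fun i hi => (mem_filter.mp (hST hi)).2
  calc μ {x | r ≤ #{i ∈ I | σ i x ∈ B}}
      ≤ ∑ S ∈ powersetCard r I, μ (⋂ i ∈ S, σ i ⁻¹' B) :=
        (measure_mono hcover).trans (measure_biUnion_finset_le _ _)
    _ ≤ ∑ _S ∈ powersetCard r I, p ^ r := by
        gcongr with S hS
        obtain ⟨hSI, hcard⟩ := mem_powersetCard.mp hS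
        rw [hσ.meas_biInter fun i _ => ⟨B, hB, rfl⟩, ← hcard, ← prod_const]
        exact prod_le_prod' fun i hi => hp i (hSI hi)
    _ = (#I).choose r * p ^ r := by rw [sum_const, card_powersetCard, nsmul_eq_mul]

open Asymptotics in
lemma eventually_mul_log_add_le_rpow (a c : ℝ) {d : ℝ} (hd : 0 < d) :
    ∀ᶠ n : ℕ in atTop, a * Real.log n + c ≤ (n : ℝ) ^ d := by
  have hlo : (fun x : ℝ => a * Real.log x + c) =o[atTop] fun x => x ^ d :=
    ((isLittleO_log_rpow_atTop hd).const_mul_left a).add <| isLittleO_const_left.2 <| Or.inr <|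
      tendsto_abs_atTop_atTop.comp (tendsto_rpow_atTop hd)
  have hreal : ∀ᶠ x : ℝ in atTop, a * Real.log x + c ≤ x ^ d := by
    filter_upwards [hlo.bound one_pos, eventually_ge_atTop 0] with x hx hx0
    simpa [abs_of_nonneg (Real.rpow_nonneg hx0 d)] using (le_abs_self _).trans hx
  exact tendsto_natCast_atTop_atTop.eventually hreal

lemma eventually_log_mul_tail_le_rpow {C₁ M α ε : ℝ} (hC₁ : 0 < C₁) (hM : 0 ≤ M) (hε : 0 < ε)
    (hεα : ε ≤ 1 + α) :
    ∀ᶠ n : ℕ in atTop, (C₁ * Real.log n + 1) *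
      ((n + 1) * (M * (n / (8 * (C₁ * Real.log n))) ^ (ε - (1 + α))))
        ≤ (n : ℝ) ^ (-α + ε * (4 + α)) := by
  filter_upwards [eventually_mul_log_add_le_rpow C₁ 1 hε,
    eventually_mul_log_add_le_rpow (8 * C₁) 0 hε, eventually_mul_log_add_le_rpow 0 (2 * M) hε,
    eventually_ge_atTop 2] with n hlogε h8logε hMε hn2
  have hn : (1 : ℝ) < n := by exact_mod_cast hn2
  have hn0 : (0 : ℝ) < n := by positivity
  have hlog : 0 < Real.log n := Real.log_pos hn
  have hs : (n : ℝ) ^ (1 - ε) ≤ n / (8 * (C₁ * Real.log n)) := by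
    rw [Real.rpow_sub hn0, Real.rpow_one]
    exact div_le_div_of_nonneg_left hn0.le (by positivity) (by linarith)
  have htail : (n / (8 * (C₁ * Real.log n))) ^ (ε - (1 + α))
      ≤ (n : ℝ) ^ ((1 - ε) * (ε - (1 + α))) := by
    rw [Real.rpow_mul hn0.le]
    exact Real.rpow_le_rpow_of_nonpos (by positivity) hs (by linarith)
  have hnM : (n + 1) * M ≤ (n : ℝ) ^ (1 + ε) := by
    rw [Real.rpow_add hn0, Real.rpow_one]
    nlinarith
  calc (C₁ * Real.log n + 1) * ((n + 1) * (M * (n / (8 * (C₁ * Real.log n))) ^ (ε - (1 + α))))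
      = (C₁ * Real.log n + 1) *
          (((n + 1) * M) * (n / (8 * (C₁ * Real.log n))) ^ (ε - (1 + α))) := by
        ring
    _ ≤ (n : ℝ) ^ ε * ((n : ℝ) ^ (1 + ε) * (n : ℝ) ^ ((1 - ε) * (ε - (1 + α)))) := by
        gcongr
    _ = (n : ℝ) ^ (ε + ((1 + ε) + (1 - ε) * (ε - (1 + α)))) := by
        rw [Real.rpow_add hn0 ε, Real.rpow_add hn0 (1 + ε)]
    _ ≤ (n : ℝ) ^ (-α + ε * (4 + α)) :=
        Real.rpow_le_rpow_of_exponent_le hn.le (by nlinarith)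

lemma measure_reach_without_big_gap_le {Ω : Type*} [MeasurableSpace Ω] {μ : Measure Ω}
    {σ : ℕ → Ω → ℕ} (hindep : ProbabilityTheory.iIndepFun σ μ)
    (hident : ∀ i, ProbabilityTheory.IdentDistrib (σ i) (σ 0) μ μ)
    {φ : ℕ → ℝ} {α ε M : ℝ} (hεα : ε ≤ 1 + α) (hM : 0 ≤ M)
    (hφ : ∀ k, 1 ≤ k → φ k ≤ M * (k : ℝ) ^ ε)
    (hlaw : ∀ k : ℕ, 1 ≤ k → μ {x | σ 0 x = k} = ENNReal.ofReal (φ k / (k : ℝ) ^ (1 + α)))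
    {b L : ℝ} (hb : b ∈ Set.Ioo (0 : ℝ) (1 / 2)) (hL : 0 < L) {n : ℕ} (hn : 0 < n) :
    μ {x | ∃ l : ℕ, (l : ℝ) ≤ L ∧
        (n : ℝ) - b * n < (∑ i ∈ range l, (σ i x : ℝ)) ∧
        (∑ i ∈ range l, (σ i x : ℝ)) ≤ (n : ℝ) ∧
        ∀ i < l, (σ i x : ℝ) < b * n}
      ≤ ENNReal.ofReal (((L + 1) * ((n + 1) * (M * (n / (8 * L)) ^ (ε - (1 + α)))))
          ^ (⌊1 / (8 * b)⌋₊ + 1)) := by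
  set r := ⌊1 / (8 * b)⌋₊ + 1
  set q := (n + 1) * (M * (n / (8 * L)) ^ (ε - (1 + α)))
  have hq : 0 ≤ q := by positivity
  have hB : MeasurableSet (Set.Icc ⌈n / (8 * L)⌉₊ n) := measurableSet_Icc
  have htail : ∀ i ∈ range (⌊L⌋₊ + 1),
      μ (σ i ⁻¹' Set.Icc ⌈n / (8 * L)⌉₊ n) ≤ ENNReal.ofReal q := fun i _ =>
    ((hident i).measure_mem_eq hB).trans_le
      (measure_preimage_Icc_ceil_le hεα hM hφ hlaw (by positivity) n)
  have hchoose : ((⌊L⌋₊ + 1).choose r : ℝ) ≤ (L + 1) ^ r := calc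
    _ ≤ ((⌊L⌋₊ + 1 : ℕ) : ℝ) ^ r := by exact_mod_cast Nat.choose_le_pow _ _
    _ ≤ (L + 1) ^ r := by push_cast; gcongr; exact Nat.floor_le hL.le
  calc μ _ ≤ μ {x | r ≤ #{i ∈ range (⌊L⌋₊ + 1) | σ i x ∈ Set.Icc ⌈n / (8 * L)⌉₊ n}} :=
        measure_mono (setOf_exists_sum_mem_Ioc_subset σ n hb hL)
    _ ≤ (⌊L⌋₊ + 1).choose r * ENNReal.ofReal q ^ r := by
        simpa using hindep.measure_le_card_filter_mem_le hB _ htail r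
    _ ≤ ENNReal.ofReal ((L + 1) ^ r) * ENNReal.ofReal q ^ r := by
        rw [← ENNReal.ofReal_natCast]
        gcongr
    _ = ENNReal.ofReal (((L + 1) * q) ^ r) := by
        rw [mul_pow, ENNReal.ofReal_mul (p := (L + 1) ^ r) (by positivity), ENNReal.ofReal_pow hq]

theorem renewal_no_big_gap_bound_general
    {Ω : Type*} [MeasurableSpace Ω] (μ : Measure Ω)
    (σ : ℕ → Ω → ℕ)
    (hindep : ProbabilityTheory.iIndepFun σ μ)
    (hident : ∀ i j, ProbabilityTheory.IdentDistrib (σ i) (σ j) μ μ)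
    (α : ℝ) (hα : 0 < α)
    (φ : ℕ → ℝ) (hφpos : ∀ k, 1 ≤ k → 0 < φ k)
    (hφslow : ∀ c : ℝ, 0 < c →
      Tendsto (fun k : ℕ => φ ⌊c * (k : ℝ)⌋₊ / φ k) atTop (nhds 1))
    (hlaw : ∀ k : ℕ, 1 ≤ k →
      μ {x | σ 0 x = k} = ENNReal.ofReal (φ k / (k : ℝ) ^ (1 + α)))
    (C₁ b : ℝ) (hC₁ : 0 < C₁) (hb : b ∈ Set.Ioo (0 : ℝ) (1/2)) :
    ∃ N : ℕ, ∀ n : ℕ, N ≤ n →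
      μ {x | ∃ l : ℕ, (l : ℝ) ≤ C₁ * Real.log n ∧
          (n : ℝ) - b * n < (∑ i ∈ Finset.range l, (σ i x : ℝ)) ∧
          (∑ i ∈ Finset.range l, (σ i x : ℝ)) ≤ (n : ℝ) ∧
          ∀ i < l, (σ i x : ℝ) < b * n}
        ≤ ENNReal.ofReal ((n : ℝ) ^ (-(α / (9 * b)))) := by
  set r := ⌊1 / (8 * b)⌋₊ + 1
  have hr : 1 < 9 * b * r := by
    have h8br : 1 / (8 * b) < r := by exact_mod_cast Nat.lt_floor_add_one (1 / (8 * b))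
    rw [div_lt_iff₀ (by linarith [hb.1])] at h8br
    nlinarith [hb.1]
  set ε := (α - α / (9 * b * r)) / (4 + α)
  have hε : 0 < ε := div_pos (sub_pos.mpr (div_lt_self hα hr)) (by linarith)
  have hεα : ε ≤ 1 + α := by
    rw [div_le_iff₀ (by linarith)]
    nlinarith [div_pos hα (by linarith : (0 : ℝ) < 9 * b * r)]
  have hexp : -α + ε * (4 + α) = -(α / (9 * b * r)) := by
    simp only [ε]; field_simp; ring
  obtain ⟨M, hM, hφM⟩ := exists_le_mul_rpow_of_eventually_le_two_rpow_mul_half hε.le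
    (eventually_le_two_rpow_mul_half hφpos (hφslow _ one_half_pos) hε)
  refine eventually_atTop.mp ?_
  filter_upwards [eventually_log_mul_tail_le_rpow (M := M) hC₁ hM hε hεα, eventually_ge_atTop 2]
    with n hn hn2
  have hL : 0 < C₁ * Real.log n := mul_pos hC₁ (Real.log_pos (by exact_mod_cast hn2))
  calc μ _ ≤ _ :=
        measure_reach_without_big_gap_le hindep (fun i => hident i 0) hεα hM hφM hlaw hb hL
          (by omega)
    _ ≤ ENNReal.ofReal (((n : ℝ) ^ (-(α / (9 * b * r)))) ^ r) := by
        gcongr; rw [← hexp]; exact hn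
    _ = ENNReal.ofReal ((n : ℝ) ^ (-(α / (9 * b)))) := by
        rw [← Real.rpow_natCast, ← Real.rpow_mul (by positivity), neg_mul, div_mul_eq_mul_div,
          mul_div_mul_right _ _ (by positivity)]

/-- Lemma 2.3: for i.i.d. gaps `σ i` with `P(σ = k) = φ(k)/k^(1+α)` (`φ` slowly
varying, `α > 0`), `C₁ > 0` and `b ∈ (0, 1/2)`, for all sufficiently large `n` the
probability that the partial sums reach `(n - bn, n]` within `C₁ log n` steps while
every gap is `< bn` is at most `n^(-α/(9b))`. -/
theorem renewal_no_big_gap_bound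
    {Ω : Type*} [MeasurableSpace Ω] (μ : Measure Ω) [IsProbabilityMeasure μ]
    (σ : ℕ → Ω → ℕ) (hmeas : ∀ i, Measurable (σ i))
    (hindep : ProbabilityTheory.iIndepFun σ μ)
    (hident : ∀ i j, ProbabilityTheory.IdentDistrib (σ i) (σ j) μ μ)
    (α : ℝ) (hα : 0 < α)
    (φ : ℕ → ℝ) (hφpos : ∀ k, 1 ≤ k → 0 < φ k)
    (hφslow : ∀ c : ℝ, 0 < c →
      Tendsto (fun k : ℕ => φ ⌊c * (k : ℝ)⌋₊ / φ k) atTop (nhds 1))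
    (hlaw : ∀ k : ℕ, 1 ≤ k →
      μ {x | σ 0 x = k} = ENNReal.ofReal (φ k / (k : ℝ) ^ (1 + α)))
    (hpos : ∀ i, ∀ᵐ x ∂μ, 1 ≤ σ i x)
    (C₁ b : ℝ) (hC₁ : 0 < C₁) (hb : b ∈ Set.Ioo (0 : ℝ) (1/2)) :
    ∃ N : ℕ, ∀ n : ℕ, N ≤ n →
      μ {x | ∃ l : ℕ, (l : ℝ) ≤ C₁ * Real.log n ∧
          (n : ℝ) - b * n < (∑ i ∈ Finset.range l, (σ i x : ℝ)) ∧
          (∑ i ∈ Finset.range l, (σ i x : ℝ)) ≤ (n : ℝ) ∧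
          ∀ i < l, (σ i x : ℝ) < b * n}
        ≤ ENNReal.ofReal ((n : ℝ) ^ (-(α / (9 * b)))) :=
  renewal_no_big_gap_bound_general μ σ hindep hident α hα φ hφpos hφslow hlaw C₁ b hC₁ hb
end
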